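/- For every t ≥ 0, the set A_t possesses a unique greatest element with respect to the relation ⪕; that is, there exists exactly one vector F(t) ∈ A_t such that a ⪕ F(t) for every a ∈ A_t. -/

import Mathlib

/-!
A vector maximizing the minimum entry exists by compactness. Two admissible vectors can be
mixed into a third one that agrees with them where they agree and lies strictly above the smaller
entry where they differ (take the point where `h i` attains the average of the two `h`-values);
hence among the maximizers there is one whose argmin set is contained in that of every other
maximizer. Freezing the entries on this argmin set and recursing on the remaining coordinates,
whose admissible set inherits closedness, boundedness and the mixing property, produces the
greatest element. Uniqueness is antisymmetry of `⪕`.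
-/

/-- The set of indices at which `a` attains its minimum. -/
noncomputable def argminSet {n : ℕ} (a : Fin n → ℝ) : Finset (Fin n) :=
  Finset.univ.filter (fun i => ∀ j, a i ≤ a j)

/-- The minimum entry of `a`. -/
noncomputable def minval {n : ℕ} (a : Fin n → ℝ) : ℝ := ⨅ i, a i

/-- The restriction of `a` to the indices in `S`, reindexed by `Fin S.card`
in increasing order. -/
noncomputable def restrictVec {n : ℕ} (S : Finset (Fin n)) (a : Fin n → ℝ) :
    Fin S.card → ℝ :=
  fun i => a (S.orderIsoOfFin rfl i).1

/-- The "min-sensitive" partial order `⪕` on `ℝⁿ` (Definition 1 of the paper):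
for `n = 1` it is the usual order; for `n ≥ 2`, `a ⪕ b` iff (i) `a = b`, or
(ii) `min a < min b`, or (iii) `min a = min b` and `Argmin b ⊊ Argmin a`, or
(iv) `min a = min b`, `Argmin a = Argmin b ⊊ {1,...,n}` and the restrictions
of `a` and `b` to the complement of the common argmin set are related. -/
noncomputable def msLE : (n : ℕ) → (Fin n → ℝ) → (Fin n → ℝ) → Prop
  | 0, _, _ => True
  | 1, a, b => a 0 ≤ b 0
  | n + 2, a, b =>
    a = b ∨
    minval a < minval b ∨
    (minval a = minval b ∧ argminSet b ⊂ argminSet a) ∨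
    (minval a = minval b ∧ argminSet a = argminSet b ∧ argminSet a ⊂ Finset.univ ∧
      msLE ((argminSet a)ᶜ).card (restrictVec (argminSet a)ᶜ a) (restrictVec (argminSet a)ᶜ b))
termination_by n => n
decreasing_by
  have hne : (argminSet a).Nonempty := by
    obtain ⟨i, -, hi⟩ := Finset.exists_min_image Finset.univ a ⟨0, Finset.mem_univ 0⟩
    refine ⟨i, ?_⟩
    unfold argminSet
    exact Finset.mem_filter.mpr ⟨Finset.mem_univ i, fun j => hi j (Finset.mem_univ j)⟩
  have h1 : 0 < (argminSet a).card := Finset.card_pos.mpr hne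
  have h2 : ((argminSet a)ᶜ).card = Fintype.card (Fin (n + 2)) - (argminSet a).card :=
    Finset.card_compl _
  simp only [Fintype.card_fin] at h2
  omega

/-- `x*_i`: the supremum of the zero set of a function. -/
noncomputable def xstar (f : ℝ → ℝ) : ℝ := sSup {x | f x = 0}

/-- The admissible set `A_t`. -/
def admissible (I J : ℕ) (h : Fin I → ℝ → ℝ) (G : Fin J → Finset (Fin I)) (t : ℝ) :
    Set (Fin I → ℝ) :=
  {a | (∀ i, a i ≤ t) ∧ ∀ j, (∑ i ∈ G j, h i (a i)) ≤ t}

/-- `F` is the `⪕`-greatest element of `A_t`. -/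
def IsGreatestMS (I J : ℕ) (h : Fin I → ℝ → ℝ) (G : Fin J → Finset (Fin I)) (t : ℝ)
    (F : Fin I → ℝ) : Prop :=
  F ∈ admissible I J h G t ∧ ∀ a ∈ admissible I J h G t, msLE I a F

open Finset

section Minval
variable {n : ℕ}

lemma mem_argminSet_iff {a : Fin n → ℝ} {i : Fin n} :
    i ∈ argminSet a ↔ ∀ j, a i ≤ a j := by
  simp [argminSet]

lemma minval_le (a : Fin n → ℝ) (i : Fin n) : minval a ≤ a i :=
  ciInf_le (Finite.bddBelow_range a) i

lemma le_minval [NeZero n] {a : Fin n → ℝ} {c : ℝ} (h : ∀ i, c ≤ a i) : c ≤ minval a :=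
  le_ciInf h

lemma mem_argminSet_iff_eq_minval {a : Fin n → ℝ} {i : Fin n} :
    i ∈ argminSet a ↔ a i = minval a := by
  rw [mem_argminSet_iff]
  refine ⟨fun h => ?_, fun h j => h ▸ minval_le a j⟩
  have : Nonempty (Fin n) := ⟨i⟩
  exact le_antisymm (le_ciInf h) (minval_le a i)

lemma argminSet_nonempty [NeZero n] (a : Fin n → ℝ) : (argminSet a).Nonempty :=
  let ⟨i, hi⟩ := exists_eq_ciInf_of_finite (f := a)
  ⟨i, mem_argminSet_iff_eq_minval.2 hi⟩

lemma minval_lt_of_notMem_argminSet {a : Fin n → ℝ} {i : Fin n} (hi : i ∉ argminSet a) :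
    minval a < a i :=
  (minval_le a i).lt_of_ne fun h => hi (mem_argminSet_iff_eq_minval.2 h.symm)

lemma card_compl_argminSet_lt [NeZero n] (a : Fin n → ℝ) : (argminSet a)ᶜ.card < n := by
  simpa using (argminSet a).card_compl_lt_iff_nonempty.2 (argminSet_nonempty a)

lemma upperSemicontinuous_minval : UpperSemicontinuous (minval : (Fin n → ℝ) → ℝ) :=
  upperSemicontinuous_ciInf (fun a => Finite.bddBelow_range a) fun i =>
    (continuous_apply i).upperSemicontinuous

lemma minval_fin_one (a : Fin 1 → ℝ) : minval a = a 0 := ciInf_unique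

lemma minval_lt_minval_restrictVec_compl {a : Fin n → ℝ} (ha : argminSet a ≠ univ) :
    minval a < minval (restrictVec (argminSet a)ᶜ a) := by
  have : Nonempty (Fin (argminSet a)ᶜ.card) :=
    ⟨⟨0, card_pos.2 ((compl_ne_univ_iff_nonempty _).1 (by rwa [compl_compl]))⟩⟩
  obtain ⟨j, hj⟩ := exists_eq_ciInf_of_finite (f := restrictVec (argminSet a)ᶜ a)
  exact (minval_lt_of_notMem_argminSet
    (mem_compl.1 ((argminSet a)ᶜ.orderIsoOfFin rfl j).2)).trans_eq hj

end Minval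

section Extend
variable {n : ℕ} {T : Finset (Fin n)} {m : ℝ}

variable (T m) in
noncomputable def extendVec (b : Fin T.card → ℝ) : Fin n → ℝ :=
  fun i => if hi : i ∈ T then b ((T.orderIsoOfFin rfl).symm ⟨i, hi⟩) else m

@[simp]
lemma extendVec_of_notMem {b : Fin T.card → ℝ} {i : Fin n} (hi : i ∉ T) :
    extendVec T m b i = m :=
  dif_neg hi

@[simp]
lemma extendVec_orderEmbOfFin (b : Fin T.card → ℝ) (j : Fin T.card) :
    extendVec T m b (T.orderEmbOfFin rfl j) = b j := by
  rw [← coe_orderIsoOfFin_apply, extendVec, dif_pos (T.orderIsoOfFin rfl j).2]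
  exact congrArg b ((T.orderIsoOfFin rfl).symm_apply_apply j)

@[simp]
lemma restrictVec_extendVec (b : Fin T.card → ℝ) : restrictVec T (extendVec T m b) = b :=
  funext (extendVec_orderEmbOfFin b)

lemma extendVec_restrictVec {a : Fin n → ℝ} (ha : ∀ i ∉ T, a i = m) :
    extendVec T m (restrictVec T a) = a := by
  funext i
  by_cases hi : i ∈ T
  · simp [extendVec, restrictVec, hi]
  · simp [hi, ha i hi]

lemma continuous_extendVec : Continuous (extendVec T m) :=
  continuous_pi fun i => by
    by_cases hi : i ∈ T
    · simpa [extendVec, hi] using continuous_apply _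
    · simpa [hi] using continuous_const

lemma minval_extendVec {b : Fin T.card → ℝ} (hT : T ≠ univ) (hb : ∀ j, m < b j) :
    minval (extendVec T m b) = m := by
  obtain ⟨k, hk⟩ := (compl_ne_univ_iff_nonempty Tᶜ).1 (by rwa [compl_compl])
  have : Nonempty (Fin n) := ⟨k⟩
  refine le_antisymm ((minval_le _ k).trans_eq (extendVec_of_notMem (mem_compl.1 hk))) ?_
  refine le_ciInf fun i => ?_
  by_cases hi : i ∈ T
  · simpa [extendVec, hi] using (hb _).le
  · simp [hi]

lemma argminSet_extendVec {b : Fin T.card → ℝ} (hT : T ≠ univ) (hb : ∀ j, m < b j) :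
    argminSet (extendVec T m b) = Tᶜ := by
  ext i
  rw [mem_argminSet_iff_eq_minval, minval_extendVec hT hb, mem_compl]
  refine ⟨fun h hi => ?_, extendVec_of_notMem⟩
  have := hb ((T.orderIsoOfFin rfl).symm ⟨i, hi⟩)
  simp only [extendVec, dif_pos hi] at h
  linarith

lemma extendVec_restrictVec_argminSet (a : Fin n → ℝ) :
    extendVec (argminSet a)ᶜ (minval a) (restrictVec (argminSet a)ᶜ a) = a :=
  extendVec_restrictVec fun i hi => mem_argminSet_iff_eq_minval.1 (by simpa using hi)

lemma restrictVec_mem_preimage_extendVec {A : Set (Fin n → ℝ)} {a : Fin n → ℝ}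
    (ha : a ∈ A) :
    restrictVec (argminSet a)ᶜ a ∈ extendVec (argminSet a)ᶜ (minval a) ⁻¹' A := by
  rwa [Set.mem_preimage, extendVec_restrictVec_argminSet]

lemma BddAbove.preimage_extendVec {A : Set (Fin n → ℝ)} (hA : BddAbove A) :
    BddAbove (extendVec T m ⁻¹' A) := by
  obtain ⟨U, hU⟩ := hA
  exact ⟨restrictVec T U, fun b hb j => by
    simpa [restrictVec] using hU hb (T.orderEmbOfFin rfl j)⟩

end Extend

section Mix
variable {ι : Type*}

def IsUpperMix (a b c : ι → ℝ) : Prop :=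
  ∀ i, (a i = b i → c i = a i) ∧ (a i ≠ b i → min (a i) (b i) < c i)

def UpperMixClosed (A : Set (ι → ℝ)) : Prop :=
  ∀ a ∈ A, ∀ b ∈ A, ∃ c ∈ A, IsUpperMix a b c

lemma IsUpperMix.min_le {a b c : ι → ℝ} (h : IsUpperMix a b c) (i : ι) :
    min (a i) (b i) ≤ c i := by
  by_cases hab : a i = b i
  · simp [(h i).1 hab, hab]
  · exact ((h i).2 hab).le

lemma IsUpperMix.eq_of_le_min {a b c : ι → ℝ} (h : IsUpperMix a b c) {i : ι}
    (hi : c i ≤ min (a i) (b i)) : a i = b i ∧ c i = a i := by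
  by_cases hab : a i = b i
  · exact ⟨hab, (h i).1 hab⟩
  · exact absurd hi ((h i).2 hab).not_ge

lemma IsUpperMix.restrictVec {n : ℕ} {a b c : Fin n → ℝ} (h : IsUpperMix a b c)
    (T : Finset (Fin n)) :
    IsUpperMix (restrictVec T a) (restrictVec T b) (restrictVec T c) :=
  fun _ => h _

lemma UpperMixClosed.preimage_extendVec {n : ℕ} {A : Set (Fin n → ℝ)} (hA : UpperMixClosed A)
    (T : Finset (Fin n)) (m : ℝ) : UpperMixClosed (extendVec T m ⁻¹' A) := by
  intro b hb b' hb'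
  obtain ⟨c, hcA, hc⟩ := hA _ hb _ hb'
  have hcm : ∀ i ∉ T, c i = m := fun i hi => by simpa [hi] using (hc i).1 (by simp [hi])
  refine ⟨restrictVec T c, by rwa [Set.mem_preimage, extendVec_restrictVec hcm], ?_⟩
  simpa only [restrictVec_extendVec] using hc.restrictVec T

end Mix

section Maximin
variable {n : ℕ} {A : Set (Fin n → ℝ)}

lemma exists_forall_minval_le (hne : A.Nonempty) (hA : IsClosed A) (hbdd : BddAbove A) :
    ∃ F ∈ A, ∀ a ∈ A, minval a ≤ minval F := by
  obtain ⟨a₀, ha₀⟩ := hne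
  obtain ⟨U, hU⟩ := hbdd
  have ha₀K : a₀ ∈ A ∩ Set.Icc (fun _ => minval a₀) U :=
    ⟨ha₀, fun i => minval_le a₀ i, hU ha₀⟩
  obtain ⟨F, hFK, hF⟩ := UpperSemicontinuousOn.exists_isMaxOn ⟨a₀, ha₀K⟩
    (isCompact_Icc.inter_left hA) (upperSemicontinuous_minval.upperSemicontinuousOn _)
  refine ⟨F, hFK.1, fun a ha => ?_⟩
  by_cases h : minval a₀ ≤ minval a
  · exact hF ⟨ha, fun i => h.trans (minval_le a i), hU ha⟩
  · exact (not_le.1 h).le.trans (hF ha₀K)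

/-- Mixing two maximizers of `minval` gives a maximizer whose argmin set lies in both argmin
sets, so an `⊂`-minimal argmin set among the maximizers is contained in all of them. -/
lemma exists_maximin_argminSet_subset [NeZero n] (hne : A.Nonempty) (hA : IsClosed A)
    (hbdd : BddAbove A) (hmix : UpperMixClosed A) :
    ∃ F ∈ A, ∀ a ∈ A,
      minval a ≤ minval F ∧ (minval a = minval F → argminSet F ⊆ argminSet a) := by
  obtain ⟨F₀, hF₀A, hF₀⟩ := exists_forall_minval_le hne hA hbdd
  obtain ⟨F, ⟨hFA, hFm⟩, hFmin⟩ := (InvImage.wf argminSet wellFounded_lt).has_min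
    {a | a ∈ A ∧ minval a = minval F₀} ⟨F₀, hF₀A, rfl⟩
  refine ⟨F, hFA, fun a ha => ⟨hFm ▸ hF₀ a ha, fun ham => ?_⟩⟩
  obtain ⟨c, hcA, hc⟩ := hmix F hFA a ha
  have hm : ∀ i, minval F ≤ min (F i) (a i) := fun i =>
    le_min (minval_le F i) (ham ▸ minval_le a i)
  have hcm : minval c = minval F :=
    le_antisymm (hFm ▸ hF₀ c hcA) (le_minval fun i => (hm i).trans (hc.min_le i))
  have hcF : argminSet c ⊆ argminSet F ∩ argminSet a := fun i hi => by
    have hci : c i = minval F := (mem_argminSet_iff_eq_minval.1 hi).trans hcm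
    obtain ⟨hFa, hcF⟩ := hc.eq_of_le_min (hci.trans_le (hm i))
    rw [mem_inter, mem_argminSet_iff_eq_minval, mem_argminSet_iff_eq_minval]
    exact ⟨hcF ▸ hci, ham ▸ hFa ▸ hcF ▸ hci⟩
  have hceq : argminSet c = argminSet F :=
    (subset_inter_iff.1 hcF).1.eq_of_not_ssubset (hFmin c ⟨hcA, hcm.trans hFm⟩)
  exact hceq ▸ (subset_inter_iff.1 hcF).2

end Maximin

section MsLE

lemma minval_le_of_msLE : ∀ {n : ℕ} {a b : Fin n → ℝ}, msLE n a b → minval a ≤ minval b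
  | 0, a, b, _ => by simp [minval]
  | 1, a, b, hab => by rw [msLE] at hab; rwa [minval_fin_one, minval_fin_one]
  | n + 2, a, b, hab => by
    rw [msLE] at hab
    rcases hab with rfl | hlt | ⟨heq, -⟩ | ⟨heq, -⟩
    exacts [le_rfl, hlt.le, heq.le, heq.le]

theorem msLE_antisymm : ∀ {n : ℕ} {a b : Fin n → ℝ}, msLE n a b → msLE n b a → a = b
  | 0, a, b, _, _ => funext finZeroElim
  | 1, a, b, hab, hba => by
    rw [msLE] at hab hba
    exact funext fun i => Subsingleton.elim i 0 ▸ le_antisymm hab hba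
  | n + 2, a, b, hab, hba => by
    have hba_le := minval_le_of_msLE hba
    have hab_le := minval_le_of_msLE hab
    rw [msLE] at hab hba
    rcases hab with rfl | hlt | ⟨-, hss⟩ | ⟨hm, hS, -, hrec⟩
    · rfl
    · exact absurd hlt hba_le.not_gt
    · rcases hba with rfl | hlt | ⟨-, hss'⟩ | ⟨-, hS', -⟩
      · rfl
      · exact absurd hlt hab_le.not_gt
      · exact absurd (hss.trans hss') (ssubset_irrefl _)
      · exact absurd (hS' ▸ hss) (ssubset_irrefl _)
    · rcases hba with rfl | hlt | ⟨-, hss'⟩ | ⟨-, -, -, hrec'⟩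
      · rfl
      · exact absurd hlt hab_le.not_gt
      · exact absurd (hS ▸ hss') (ssubset_irrefl _)
      · rw [← extendVec_restrictVec_argminSet a, ← extendVec_restrictVec_argminSet b, ← hS,
          ← hm, msLE_antisymm hrec (hS ▸ hrec')]
termination_by n => n
decreasing_by exact card_compl_argminSet_lt a

lemma msLE_of_minval_le {n : ℕ} {a F : Fin (n + 2) → ℝ} (hm : minval a ≤ minval F)
    (hS : minval a = minval F → argminSet F ⊆ argminSet a)
    (hrec : minval a = minval F → argminSet a = argminSet F → argminSet F ≠ univ →
      msLE _ (restrictVec (argminSet F)ᶜ a) (restrictVec (argminSet F)ᶜ F)) :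
    msLE (n + 2) a F := by
  rw [msLE]
  obtain hlt | heq := hm.lt_or_eq
  · exact Or.inr (Or.inl hlt)
  obtain hss | hSeq := (hS heq).ssubset_or_eq
  · exact Or.inr (Or.inr (Or.inl ⟨heq, hss⟩))
  by_cases hu : argminSet F = univ
  · left
    funext i
    have hi : i ∈ argminSet F := hu ▸ mem_univ i
    have hi' : i ∈ argminSet a := hSeq ▸ hi
    rw [mem_argminSet_iff_eq_minval.1 hi, mem_argminSet_iff_eq_minval.1 hi', heq]
  · refine Or.inr (Or.inr (Or.inr ⟨heq, hSeq.symm, hSeq ▸ ssubset_univ_iff.2 hu, ?_⟩))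
    rw [← hSeq]
    exact hrec heq hSeq.symm hu

end MsLE

section Greatest
variable {n : ℕ}

def IsMsGreatest (A : Set (Fin n → ℝ)) (F : Fin n → ℝ) : Prop :=
  F ∈ A ∧ ∀ a ∈ A, msLE n a F

lemma isMsGreatest_extendVec {A : Set (Fin (n + 2) → ℝ)} {F₁ : Fin (n + 2) → ℝ}
    (hF₁A : F₁ ∈ A)
    (hF₁ : ∀ a ∈ A,
      minval a ≤ minval F₁ ∧ (minval a = minval F₁ → argminSet F₁ ⊆ argminSet a))
    (hS : argminSet F₁ ≠ univ) {F' : Fin (argminSet F₁)ᶜ.card → ℝ}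
    (hF' : IsMsGreatest (extendVec (argminSet F₁)ᶜ (minval F₁) ⁻¹' A) F') :
    IsMsGreatest A (extendVec (argminSet F₁)ᶜ (minval F₁) F') := by
  have hF'm : ∀ j, minval F₁ < F' j := fun j =>
    (minval_lt_minval_restrictVec_compl hS).trans_le <|
      (minval_le_of_msLE (hF'.2 _ (restrictVec_mem_preimage_extendVec hF₁A))).trans
        (minval_le F' j)
  have hT : (argminSet F₁)ᶜ ≠ univ :=
    (compl_ne_univ_iff_nonempty _).2 (argminSet_nonempty F₁)
  have hFm := minval_extendVec hT hF'm
  have hFS : argminSet (extendVec (argminSet F₁)ᶜ (minval F₁) F') = argminSet F₁ := by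
    rw [argminSet_extendVec hT hF'm, compl_compl]
  refine ⟨hF'.1, fun a ha => ?_⟩
  obtain ⟨hle, hsub⟩ := hF₁ a ha
  refine msLE_of_minval_le (hle.trans_eq hFm.symm) (by rwa [hFm, hFS]) ?_
  rw [hFm, hFS, restrictVec_extendVec]
  intro ham haS _
  apply hF'.2
  rw [← ham, ← haS]
  exact restrictVec_mem_preimage_extendVec ha

theorem exists_isMsGreatest : ∀ {n : ℕ} {A : Set (Fin n → ℝ)}, A.Nonempty → IsClosed A →
    BddAbove A → UpperMixClosed A → ∃ F, IsMsGreatest A F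
  | 0, _, ⟨F, hF⟩, _, _, _ => ⟨F, hF, fun _ _ => by rw [msLE]; trivial⟩
  | 1, _, hne, hA, hbdd, _ => by
    obtain ⟨F, hFA, hF⟩ := exists_forall_minval_le hne hA hbdd
    exact ⟨F, hFA, fun a ha => by simpa [msLE, minval_fin_one] using hF a ha⟩
  | n + 2, A, hne, hA, hbdd, hmix => by
    obtain ⟨F₁, hF₁A, hF₁⟩ := exists_maximin_argminSet_subset hne hA hbdd hmix
    by_cases hS : argminSet F₁ = univ
    · exact ⟨F₁, hF₁A, fun a ha =>
        msLE_of_minval_le (hF₁ a ha).1 (hF₁ a ha).2 fun _ _ hS' => absurd hS hS'⟩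
    obtain ⟨F', hF'⟩ := exists_isMsGreatest ⟨_, restrictVec_mem_preimage_extendVec hF₁A⟩
      (hA.preimage continuous_extendVec) hbdd.preimage_extendVec (hmix.preimage_extendVec _ _)
    exact ⟨_, isMsGreatest_extendVec hF₁A hF₁ hS hF'⟩
termination_by n => n
decreasing_by exact card_compl_argminSet_lt F₁

end Greatest

lemma exists_mem_uIcc_eq_average {f : ℝ → ℝ} {x y : ℝ}
    (hf : ContinuousOn f (Set.uIcc x y)) :
    ∃ z ∈ Set.uIcc x y, f z = (f x + f y) / 2 ∧ (x ≠ y → min x y < z) := by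
  by_cases hfxy : f x = f y
  · refine ⟨max x y, ⟨inf_le_sup, le_rfl⟩, ?_, fun hxy => min_lt_max.2 hxy⟩
    rcases max_choice x y with h | h <;> rw [h] <;> linarith
  have hmid : (f x + f y) / 2 ∈ Set.uIcc (f x) (f y) := by
    rcases le_total (f x) (f y) with h | h
    · exact Set.mem_uIcc.2 (Or.inl ⟨by linarith, by linarith⟩)
    · exact Set.mem_uIcc.2 (Or.inr ⟨by linarith, by linarith⟩)
  obtain ⟨z, hz, hfz⟩ := intermediate_value_uIcc hf hmid
  refine ⟨z, hz, hfz, fun _ => (hz.1 : min x y ≤ z).lt_of_ne ?_⟩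
  rintro rfl
  rcases min_choice x y with h | h <;> rw [h] at hfz <;> exact hfxy (by linarith)

section Admissible
variable {I J : ℕ} {h : Fin I → ℝ → ℝ} {G : Fin J → Finset (Fin I)} {t : ℝ}

lemma admissible_nonempty (hmono : ∀ i, Monotone (h i)) (hzero : ∀ i, ∃ x, h i x = 0)
    (ht : 0 ≤ t) : (admissible I J h G t).Nonempty := by
  choose x hx using hzero
  refine ⟨fun i => min (x i) t, fun i => min_le_right _ _, fun j => ?_⟩
  calc ∑ i ∈ G j, h i (min (x i) t) ≤ ∑ i ∈ G j, h i (x i) :=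
        sum_le_sum fun i _ => hmono i (min_le_left _ _)
    _ = 0 := by simp [hx]
    _ ≤ t := ht

lemma isClosed_admissible (hcont : ∀ i, Continuous (h i)) :
    IsClosed (admissible I J h G t) := by
  simp only [admissible, Set.ofPred_and, Set.ofPred_forall]
  refine (isClosed_iInter fun i => isClosed_le (continuous_apply i) continuous_const).inter
    (isClosed_iInter fun j => isClosed_le ?_ continuous_const)
  exact continuous_finsetSum _ fun i _ => (hcont i).comp (continuous_apply i)

lemma upperMixClosed_admissible (hcont : ∀ i, Continuous (h i)) :
    UpperMixClosed (admissible I J h G t) := by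
  intro a ha b hb
  choose c hc hhc hlt using fun i => exists_mem_uIcc_eq_average (hcont i).continuousOn
    (x := a i) (y := b i)
  refine ⟨c, ⟨fun i => (hc i).2.trans (sup_le (ha.1 i) (hb.1 i)), fun j => ?_⟩,
    fun i => ⟨fun hab => by simpa [hab] using hc i, hlt i⟩⟩
  calc ∑ i ∈ G j, h i (c i) = ((∑ i ∈ G j, h i (a i)) + ∑ i ∈ G j, h i (b i)) / 2 := by
        simp only [hhc, ← sum_div, sum_add_distrib]
    _ ≤ t := by linarith [ha.2 j, hb.2 j]

end Admissible

theorem existsUnique_greatest_general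
    (I J : ℕ)
    (h : Fin I → ℝ → ℝ)
    (hcont : ∀ i, Continuous (h i))
    (hmono : ∀ i, Monotone (h i))
    (hzero : ∀ i, ∃ x, h i x = 0)
    (G : Fin J → Finset (Fin I))
    (t : ℝ) (ht : 0 ≤ t) :
    ∃! F : Fin I → ℝ, IsGreatestMS I J h G t F := by
  obtain ⟨F, hF⟩ := exists_isMsGreatest (admissible_nonempty hmono hzero ht)
    (isClosed_admissible hcont) ⟨fun _ => t, fun _ ha => ha.1⟩ (upperMixClosed_admissible hcont)
  exact ⟨F, hF, fun F' hF' => msLE_antisymm (hF.2 F' hF'.1) (hF'.2 F hF.1)⟩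

/-- for every `t ≥ 0` the set `A_t` has a unique `⪕`-greatest element. -/
theorem existsUnique_greatest
    (I J : ℕ) (hI : 0 < I) (hJ : 0 < J)
    (h : Fin I → ℝ → ℝ)
    (hcont : ∀ i, Continuous (h i))
    (hnonneg : ∀ i x, 0 ≤ h i x)
    (hmono : ∀ i, Monotone (h i))
    (htop : ∀ i, Filter.Tendsto (h i) Filter.atTop Filter.atTop)
    (hzero : ∀ i, ∃ x, h i x = 0)
    (hxle : ∀ i, xstar (h i) ≤ 0)
    (G : Fin J → Finset (Fin I))
    (hGinj : Function.Injective G)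
    (hGne : ∀ j, (G j).Nonempty)
    (hGcover : ∀ i, ∃ j, i ∈ G j)
    (t : ℝ) (ht : 0 ≤ t) :
    ∃! F : Fin I → ℝ, IsGreatestMS I J h G t F :=
  existsUnique_greatest_general I J h hcont hmono hzero G t ht
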